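/- (NO filter soundness, set form) Let x be a sequence of length m and y a sequence of length n over a linearly ordered alphabet Σ with m ≤ n, and let q be an integer with 0 < q < m. Then { j : j + m ≤ n and x ≈ y[j…j+m−1] } ⊆ { j : j + m ≤ n and for all 0 ≤ i < m − q, φ^q_x[i] = φ^q_y[j+i] }; i.e. every order-preserving occurrence position of x in y is a candidate position detected by the q-NO filtration. -/

import Mathlib

variable {α : Type*} [LinearOrder α]

/-- β_x(i,j) = 1 if x[i] ≥ x[j], 0 otherwise. -/
def beta {m : ℕ} (x : Fin m → α) (i j : Fin m) : ℕ :=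
  if x j ≤ x i then 1 else 0

/-- The rank function ρ_x. -/
def rankFn {m : ℕ} (x : Fin m → α) (i : Fin m) : ℕ :=
  (Finset.univ.filter fun j => x j < x i ∨ (x j = x i ∧ j < i)).card

/-- Order isomorphism of two sequences of the same length. -/
def OrderIsom {m : ℕ} (x y : Fin m → α) : Prop :=
  ∀ i j : Fin m, x i ≤ x j ↔ y i ≤ y j

/-- The q-neighborhood-ranking value χ^q_x[i]. -/
def chi {m : ℕ} (x : Fin m → α) (q i : ℕ) (h : i + q < m) : ℕ :=
  ∑ j : Fin q, beta x ⟨i, by omega⟩ ⟨i + (j.val + 1), by have := j.isLt; omega⟩ *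
    2 ^ (q - (j.val + 1))

/-- The q-neighborhood-ordering value φ^q_x[i]. -/
def phi {m : ℕ} (x : Fin m → α) (q i : ℕ) (h : i + q < m) : ℕ :=
  ∑ k : Fin q, chi x (k.val + 1) (i + q - (k.val + 1)) (by have := k.isLt; omega) *
    2 ^ ((k.val + 1) * k.val / 2)

section Neighborhood

variable {m : ℕ} {x y : Fin m → α}

theorem OrderIsom.beta_eq (h : OrderIsom x y) : beta x = beta y := by
  ext i j
  simp only [beta, h j i]

theorem OrderIsom.chi_eq (h : OrderIsom x y) (q i : ℕ) (hi : i + q < m) :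
    chi x q i hi = chi y q i hi := by
  simp only [chi, h.beta_eq]

theorem OrderIsom.phi_eq (h : OrderIsom x y) (q i : ℕ) (hi : i + q < m) :
    phi x q i hi = phi y q i hi := by
  simp only [phi, h.chi_eq]

end Neighborhood

section Window

variable {m n : ℕ} (y : Fin n → α) {j : ℕ}

theorem chi_window (hj : j + m ≤ n) (q i : ℕ) (hi : i + q < m) :
    chi (fun l : Fin m => y ⟨j + l.val, by omega⟩) q i hi = chi y q (j + i) (by omega) := by
  refine Finset.sum_congr rfl fun l _ => ?_
  simp only [beta, add_assoc]

theorem phi_window (hj : j + m ≤ n) (q i : ℕ) (hi : i + q < m) :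
    phi (fun l : Fin m => y ⟨j + l.val, by omega⟩) q i hi = phi y q (j + i) (by omega) := by
  refine Finset.sum_congr rfl fun k _ => ?_
  rw [chi_window y hj]
  congr 2
  omega

end Window

/-- NO filter soundness (set form): every order-preserving occurrence position of
`x` in `y` is a candidate position detected by the q-NO filtration. -/
theorem no_filter_sound {m n : ℕ} (x : Fin m → α) (y : Fin n → α)
    (q : ℕ) :
    {j : ℕ | ∃ hj : j + m ≤ n,
        OrderIsom x (fun l : Fin m => y ⟨j + l.val, by have := l.isLt; omega⟩)} ⊆
    {j : ℕ | ∃ hj : j + m ≤ n,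
        ∀ i : ℕ, ∀ hi : i + q < m, phi x q i hi = phi y q (j + i) (by omega)} := by
  rintro j ⟨hj, hiso⟩
  exact ⟨hj, fun i hi => (hiso.phi_eq q i hi).trans (phi_window y hj q i hi)⟩
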